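/- arXiv:1904.03271 — 2 statements merged into one kernel-verified Lean document; each statement's English description precedes it below -/
import Mathlib

section
/- In the F_2 row space of the incidence matrix A* of the complete k-uniform hypergraph on n vertices, the rows indexed by the k-subsets containing the vertex 1 (i.e., the star at vertex 1) form a linearly independent set that spans the full row space of A*. -/
/-!
The star rows are independent because the row of a star set `e` is the only star row that is
nonzero at `e.erase v`. They span because over `𝔽₂` the boundary of a boundary vanishes: for
`v ∉ e`, applied to the simplex `insert v e` this expresses the row of `e` as the sum of the rows
of the star sets `insert v (e.erase x)`, `x ∈ e`.
-/

open Finset Submodule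

variable {α R : Type*} [DecidableEq α]

/-- The row of `A*` indexed by `e`, whose columns are the `r`-subsets of `α`. -/
def inclusionRow (R : Type*) [Zero R] [One R] (r : ℕ) (e : Finset α) :
    {t : Finset α // t.card = r} → R :=
  fun t => if t.1 ⊆ e then 1 else 0

theorem Finset.erase_subset_iff_eq {v : α} {e e' : Finset α} (he' : v ∈ e')
    (hcard : e'.card ≤ e.card) : e.erase v ⊆ e' ↔ e = e' := by
  rw [erase_subset_iff_of_mem he']
  exact ⟨fun h => eq_of_subset_of_card_le h hcard, fun h => h.subset⟩

theorem linearIndependent_inclusionRow_star [Ring R] (v : α) (r : ℕ) :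
    LinearIndependent R fun e : {s : Finset α // s.card = r + 1 ∧ v ∈ s} =>
      inclusionRow R r e.1 := by
  rw [linearIndependent_iff']
  intro s g hg e he
  have hrow := congrFun hg ⟨e.1.erase v, by rw [card_erase_of_mem e.2.2, e.2.1]; rfl⟩
  simp only [Finset.sum_apply, Pi.smul_apply, smul_eq_mul, Pi.zero_apply, inclusionRow] at hrow
  have hothers : ∀ e' ∈ s, e' ≠ e → g e' * (if e.1.erase v ⊆ e'.1 then 1 else 0) = 0 := by
    intro e' _ hne
    have hsub : ¬ e.1.erase v ⊆ e'.1 := by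
      rw [erase_subset_iff_eq e'.2.2 (by rw [e.2.1, e'.2.1])]
      exact fun h => hne (Subtype.ext h).symm
    rw [if_neg hsub, mul_zero]
  rwa [sum_eq_single_of_mem e he hothers, if_pos (erase_subset v e.1), mul_one] at hrow

/-- `∂ ∘ ∂ = 0` in characteristic two. -/
theorem sum_inclusionRow_erase [Ring R] [CharP R 2] {r : ℕ} {f : Finset α}
    (hf : f.card = r + 2) : ∑ y ∈ f, inclusionRow R r (f.erase y) = 0 := by
  funext s
  simp only [Finset.sum_apply, inclusionRow, Pi.zero_apply]
  rw [sum_boole]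
  by_cases hs : s.1 ⊆ f
  · have hfilter : {y ∈ f | s.1 ⊆ f.erase y} = f \ s.1 := by
      ext y
      simp only [mem_filter, mem_sdiff, subset_erase, and_iff_right hs]
    rw [hfilter, card_sdiff_of_subset hs, hf, s.2, Nat.add_sub_cancel_left]
    exact_mod_cast CharTwo.two_eq_zero
  · rw [filter_false_of_mem fun y _ h => hs (h.trans (erase_subset y f)), card_empty,
      Nat.cast_zero]

theorem inclusionRow_mem_span_star [Ring R] [CharP R 2] {v : α} {r : ℕ} {e : Finset α}
    (hv : v ∉ e) (he : e.card = r + 1) :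
    inclusionRow R r e ∈
      span R (Set.range fun s : {s : Finset α // s.card = r + 1 ∧ v ∈ s} =>
        inclusionRow R r s.1) := by
  have hboundary := sum_inclusionRow_erase (R := R) (r := r) (f := insert v e)
    (by rw [card_insert_of_notMem hv, he])
  rw [sum_insert hv, erase_insert hv] at hboundary
  rw [eq_neg_of_add_eq_zero_left hboundary]
  refine neg_mem <| sum_mem fun x hx =>
    subset_span ⟨⟨insert v (e.erase x), ?_, mem_insert_self _ _⟩, ?_⟩
  · rw [card_insert_of_notMem fun h => hv (mem_of_mem_erase h), card_erase_of_mem hx, he]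
    rfl
  · rw [erase_insert_of_ne fun h : v = x => hv (h ▸ hx)]

theorem span_inclusionRow_star [Ring R] [CharP R 2] (v : α) (r : ℕ) :
    span R (Set.range fun s : {s : Finset α // s.card = r + 1 ∧ v ∈ s} =>
        inclusionRow R r s.1) =
      span R (Set.range fun e : {s : Finset α // s.card = r + 1} => inclusionRow R r e.1) := by
  apply le_antisymm
  · exact span_mono <| Set.range_subset_iff.2 fun s => ⟨⟨s.1, s.2.1⟩, rfl⟩
  · refine span_le.2 <| Set.range_subset_iff.2 fun e => ?_
    by_cases hv : v ∈ e.1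
    · exact subset_span ⟨⟨e.1, e.2, hv⟩, rfl⟩
    · exact inclusionRow_mem_span_star hv e.2

theorem stmt_1_general (n k : ℕ) (h2 : 2 ≤ k) (v₀ : Fin n) :
    LinearIndependent (ZMod 2)
      (fun (e : {s : Finset (Fin n) // s.card = k ∧ v₀ ∈ s}) =>
        (fun (t : {s : Finset (Fin n) // s.card = k - 1}) =>
          if t.1 ⊆ e.1 then (1 : ZMod 2) else 0)) ∧
    Submodule.span (ZMod 2)
      (Set.range (fun (e : {s : Finset (Fin n) // s.card = k ∧ v₀ ∈ s}) =>
        (fun (t : {s : Finset (Fin n) // s.card = k - 1}) =>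
          if t.1 ⊆ e.1 then (1 : ZMod 2) else 0))) =
    Submodule.span (ZMod 2)
      (Set.range (fun (e : {s : Finset (Fin n) // s.card = k}) =>
        (fun (t : {s : Finset (Fin n) // s.card = k - 1}) =>
          if t.1 ⊆ e.1 then (1 : ZMod 2) else 0))) := by
  obtain ⟨r, rfl⟩ : ∃ r, k = r + 1 := ⟨k - 1, by omega⟩
  exact ⟨linearIndependent_inclusionRow_star v₀ r, span_inclusionRow_star v₀ r⟩

theorem stmt_1 (n k : ℕ) (h2 : 2 ≤ k) (hkn : k ≤ n) (v₀ : Fin n) (hv₀ : v₀.val = 0) :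
    LinearIndependent (ZMod 2)
      (fun (e : {s : Finset (Fin n) // s.card = k ∧ v₀ ∈ s}) =>
        (fun (t : {s : Finset (Fin n) // s.card = k - 1}) =>
          if t.1 ⊆ e.1 then (1 : ZMod 2) else 0)) ∧
    Submodule.span (ZMod 2)
      (Set.range (fun (e : {s : Finset (Fin n) // s.card = k ∧ v₀ ∈ s}) =>
        (fun (t : {s : Finset (Fin n) // s.card = k - 1}) =>
          if t.1 ⊆ e.1 then (1 : ZMod 2) else 0))) =
    Submodule.span (ZMod 2)
      (Set.range (fun (e : {s : Finset (Fin n) // s.card = k}) =>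
        (fun (t : {s : Finset (Fin n) // s.card = k - 1}) =>
          if t.1 ⊆ e.1 then (1 : ZMod 2) else 0))) :=
  stmt_1_general n k h2 v₀
end

section
/- Shearer's lemma (random subset form): Let X = (X_1,...,X_n) be a discrete random vector and S a random subset of [n] independent of X. Then H(X_S | S) ≥ H(X) · min_{i ∈ [n]} P(i ∈ S), where X_S denotes the restriction of X to the coordinates in S. -/
/-- Probability that the random variable `X` (on finite outcome space `Ω`
with probability mass function `p`) takes the value `a`. -/
noncomputable def pmass {Ω α : Type*} [Fintype Ω] [DecidableEq α]
    (p : Ω → ℝ) (X : Ω → α) (a : α) : ℝ :=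
  ∑ ω, if X ω = a then p ω else 0

/-- Shannon entropy (in bits) of a finitely valued random variable. -/
noncomputable def ent {Ω α : Type*} [Fintype Ω] [Fintype α] [DecidableEq α]
    (p : Ω → ℝ) (X : Ω → α) : ℝ :=
  ∑ a, -(pmass p X a * Real.logb 2 (pmass p X a))

/-- Conditional Shannon entropy `H(X | Y) = H(X, Y) - H(Y)`. -/
noncomputable def condEnt {Ω α β : Type*} [Fintype Ω] [Fintype α] [Fintype β]
    [DecidableEq α] [DecidableEq β] (p : Ω → ℝ) (X : Ω → α) (Y : Ω → β) : ℝ :=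
  ent p (fun ω => (X ω, Y ω)) - ent p Y

/-- `p` is a probability mass function on `Ω`. -/
def IsProb {Ω : Type*} [Fintype Ω] (p : Ω → ℝ) : Prop :=
  (∀ ω, 0 ≤ p ω) ∧ ∑ ω, p ω = 1

/-!
Order the coordinates and write `d i = H(X_i | X_j, j < i)`. The chain rule gives
`H(X) = ∑ i, d i`; applied to `X_s` it gives `H(X_s) = ∑ i ∈ s, H(X_i | X_j, j ∈ s, j < i)`,
and since conditioning on fewer coordinates can only increase entropy, `∑ i ∈ s, d i ≤ H(X_s)`.
Averaging over `s` with weights `P(S = s)` counts each `d i ≥ 0` with weight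
`P(i ∈ S) ≥ min_i P(i ∈ S)`. That conditioning reduces entropy is Gibbs' inequality
`log x ≤ x - 1`.
-/

open Finset

section Entropy

variable {Ω α β : Type*} [Fintype Ω] {p : Ω → ℝ}

lemma pmass_nonneg [DecidableEq α] (hp : ∀ ω, 0 ≤ p ω) (X : Ω → α) (a : α) :
    0 ≤ pmass p X a :=
  sum_nonneg fun ω _ => by split_ifs <;> simp [hp ω]

lemma le_pmass_apply [DecidableEq α] (hp : ∀ ω, 0 ≤ p ω) (X : Ω → α) (ω : Ω) :
    p ω ≤ pmass p X (X ω) := by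
  simpa [pmass] using single_le_sum (f := fun ω' => if X ω' = X ω then p ω' else 0)
    (fun ω' _ => by split_ifs <;> simp [hp ω']) (mem_univ ω)

lemma pmass_le_pmass_comp [DecidableEq α] [DecidableEq β] (hp : ∀ ω, 0 ≤ p ω)
    (X : Ω → α) (f : α → β) (a : α) :
    pmass p X a ≤ pmass p (fun ω => f (X ω)) (f a) :=
  sum_le_sum fun ω _ => by split_ifs with h h' <;> simp_all

lemma pmass_comp_apply_of_injective [DecidableEq α] [DecidableEq β] (X : Ω → α) {f : α → β}
    (hf : Function.Injective f) (a : α) :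
    pmass p (fun ω => f (X ω)) (f a) = pmass p X a := by
  simp only [pmass, hf.eq_iff]

lemma sum_pmass_mul [Fintype α] [DecidableEq α] (X : Ω → α) (φ : α → ℝ) :
    ∑ a, pmass p X a * φ a = ∑ ω, p ω * φ (X ω) := by
  simp only [pmass, sum_mul, ite_mul, zero_mul]
  rw [sum_comm]
  simp

lemma sum_pmass [Fintype α] [DecidableEq α] (X : Ω → α) : ∑ a, pmass p X a = ∑ ω, p ω := by
  simpa using sum_pmass_mul (p := p) X 1

lemma sum_pmass_prod_mk_left [Fintype α] [DecidableEq α] [DecidableEq β]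
    (X : Ω → α) (Y : Ω → β) (b : β) :
    ∑ a, pmass p (fun ω => (X ω, Y ω)) (a, b) = pmass p Y b := by
  simp only [pmass, Prod.mk.injEq, ite_and]
  rw [sum_comm]
  simp

lemma ent_eq_sum_mul_neg_logb [Fintype α] [DecidableEq α] (X : Ω → α) :
    ent p X = ∑ ω, p ω * -Real.logb 2 (pmass p X (X ω)) := by
  rw [ent, ← sum_pmass_mul X fun a => -Real.logb 2 (pmass p X a)]
  simp only [mul_neg]

lemma ent_comp_le [Fintype α] [DecidableEq α] [Fintype β] [DecidableEq β]
    (hp : ∀ ω, 0 ≤ p ω) (X : Ω → α) (f : α → β) :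
    ent p (fun ω => f (X ω)) ≤ ent p X := by
  rw [ent_eq_sum_mul_neg_logb, ent_eq_sum_mul_neg_logb]
  refine sum_le_sum fun ω _ => ?_
  rcases (hp ω).eq_or_lt with h0 | h0
  · simp [← h0]
  · have hpos := h0.trans_le (le_pmass_apply hp X ω)
    exact mul_le_mul_of_nonneg_left (neg_le_neg <| Real.logb_le_logb_of_le one_lt_two hpos
      (pmass_le_pmass_comp hp X f (X ω))) h0.le

lemma ent_comp_of_injective [Fintype α] [DecidableEq α] [Fintype β] [DecidableEq β]
    (X : Ω → α) {f : α → β} (hf : Function.Injective f) :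
    ent p (fun ω => f (X ω)) = ent p X := by
  simp only [ent_eq_sum_mul_neg_logb, pmass_comp_apply_of_injective X hf]

lemma condEnt_nonneg [Fintype α] [DecidableEq α] [Fintype β] [DecidableEq β]
    (hp : ∀ ω, 0 ≤ p ω) (X : Ω → α) (Y : Ω → β) : 0 ≤ condEnt p X Y :=
  sub_nonneg.2 <| ent_comp_le hp (fun ω => (X ω, Y ω)) Prod.snd

lemma ent_of_subsingleton [Fintype α] [DecidableEq α] [Subsingleton α]
    (hp : ∑ ω, p ω = 1) (X : Ω → α) : ent p X = 0 := by
  have h : ∀ ω, pmass p X (X ω) = 1 := fun ω => by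
    rw [pmass, ← hp]
    exact sum_congr rfl fun ω' _ => if_pos (Subsingleton.elim _ _)
  simp [ent_eq_sum_mul_neg_logb, h]

end Entropy

section Conditioning

variable {Ω α β γ : Type*} [Fintype Ω] {p : Ω → ℝ}

lemma sum_mul_logb_nonpos (hp : ∀ ω, 0 ≤ p ω) {R : Ω → ℝ} (hR : ∀ ω, 0 < p ω → 0 < R ω)
    (hsum : ∑ ω, p ω * R ω ≤ ∑ ω, p ω) : ∑ ω, p ω * Real.logb 2 (R ω) ≤ 0 := by
  have hlog2 := Real.log_pos one_lt_two
  have key : ∀ ω, p ω * Real.logb 2 (R ω) ≤ (p ω * R ω - p ω) / Real.log 2 := by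
    intro ω
    rcases (hp ω).eq_or_lt with h0 | h0
    · simp [← h0]
    · rw [Real.logb, ← mul_div_assoc, div_le_div_iff_of_pos_right hlog2]
      nlinarith [Real.log_le_sub_one_of_pos (hR ω h0)]
  calc ∑ ω, p ω * Real.logb 2 (R ω)
      ≤ ∑ ω, (p ω * R ω - p ω) / Real.log 2 := sum_le_sum fun ω _ => key ω
    _ = (∑ ω, p ω * R ω - ∑ ω, p ω) / Real.log 2 := by rw [← sum_div, sum_sub_distrib]
    _ ≤ 0 := div_nonpos_of_nonpos_of_nonneg (sub_nonpos.2 hsum) hlog2.le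

variable [Fintype α] [DecidableEq α] [Fintype β] [DecidableEq β] [DecidableEq γ]

/-- `H(U | V) - H(U | g V)` is the expected `logb` of this ratio. -/
lemma sum_mul_likelihood_ratio_le (hp : ∀ ω, 0 ≤ p ω) (U : Ω → α) (V : Ω → β) (g : β → γ) :
    ∑ ω, p ω * (pmass p V (V ω) * pmass p (fun ω => (U ω, g (V ω))) (U ω, g (V ω)) /
        (pmass p (fun ω => (U ω, V ω)) (U ω, V ω) * pmass p (fun ω => g (V ω)) (g (V ω)))) ≤
      ∑ ω, p ω := by
  set PUV := pmass p (fun ω => (U ω, V ω))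
  set PV := pmass p V
  set PUW := pmass p (fun ω => (U ω, g (V ω)))
  set PW := pmass p (fun ω => g (V ω))
  set φ : α × β → ℝ := fun t => PV t.2 * PUW (t.1, g t.2) / (PUV t * PW (g t.2))
  calc ∑ ω, p ω * φ (U ω, V ω) = ∑ t, PUV t * φ t := (sum_pmass_mul _ φ).symm
    _ ≤ ∑ t : α × β, PV t.2 * PUW (t.1, g t.2) / PW (g t.2) := by
      refine sum_le_sum fun t _ => ?_
      rcases eq_or_ne (PUV t) 0 with h0 | h0
      · rw [h0, zero_mul]
        exact div_nonneg (mul_nonneg (pmass_nonneg hp _ _) (pmass_nonneg hp _ _))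
          (pmass_nonneg hp _ _)
      · rw [← mul_div_assoc, mul_div_mul_left _ _ h0]
    _ = ∑ b, PV b * ((∑ a, PUW (a, g b)) / PW (g b)) := by
      rw [Fintype.sum_prod_type, sum_comm]
      simp only [sum_div, mul_sum, mul_div_assoc]
    _ ≤ ∑ b, PV b := sum_le_sum fun b _ => by
      rw [sum_pmass_prod_mk_left]
      exact mul_le_of_le_one_right (pmass_nonneg hp _ _) (div_self_le_one _)
    _ = ∑ ω, p ω := sum_pmass V

lemma condEnt_le_condEnt_comp [Fintype γ] (hp : ∀ ω, 0 ≤ p ω) (U : Ω → α) (V : Ω → β)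
    (g : β → γ) :
    condEnt p U V ≤ condEnt p U (fun ω => g (V ω)) := by
  set PUV := pmass p (fun ω => (U ω, V ω))
  set PV := pmass p V
  set PUW := pmass p (fun ω => (U ω, g (V ω)))
  set PW := pmass p (fun ω => g (V ω))
  set R : Ω → ℝ := fun ω => PV (V ω) * PUW (U ω, g (V ω)) / (PUV (U ω, V ω) * PW (g (V ω)))
  have hpos : ∀ ω, 0 < p ω → 0 < PUV (U ω, V ω) ∧ 0 < PV (V ω) ∧
      0 < PUW (U ω, g (V ω)) ∧ 0 < PW (g (V ω)) := fun ω h0 =>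
    ⟨h0.trans_le (le_pmass_apply hp _ ω), h0.trans_le (le_pmass_apply hp _ ω),
      h0.trans_le (le_pmass_apply hp _ ω), h0.trans_le (le_pmass_apply hp _ ω)⟩
  have hR : ∀ ω, 0 < p ω → 0 < R ω := fun ω h0 => by
    obtain ⟨h1, h2, h3, h4⟩ := hpos ω h0
    positivity
  have hdiff : condEnt p U V - condEnt p U (fun ω => g (V ω)) =
      ∑ ω, p ω * Real.logb 2 (R ω) := by
    simp only [condEnt, ent_eq_sum_mul_neg_logb, ← sum_sub_distrib]
    refine sum_congr rfl fun ω _ => ?_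
    rcases (hp ω).eq_or_lt with h0 | h0
    · simp [← h0]
    · obtain ⟨h1, h2, h3, h4⟩ := hpos ω h0
      rw [Real.logb_div (by positivity) (by positivity), Real.logb_mul h2.ne' h3.ne',
        Real.logb_mul h1.ne' h4.ne']
      ring
  linarith [sum_mul_logb_nonpos hp hR (sum_mul_likelihood_ratio_le hp U V g)]

end Conditioning

lemma ent_restrict_insert {Ω α ι : Type*} [Fintype Ω] {p : Ω → ℝ} [Fintype α] [DecidableEq α]
    [DecidableEq ι] (X : ι → Ω → α) {a : ι} {s : Finset ι} (ha : a ∉ s) :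
    ent p (fun ω (i : ↥(insert a s)) => X i ω) =
      ent p (fun ω => (X a ω, fun i : ↥s => X i ω)) := by
  have hinj : Function.Injective fun v : ↥(insert a s) → α =>
      (v ⟨a, mem_insert_self a s⟩, restrict₂ (π := fun _ => α) (subset_insert a s) v) := by
    intro v w h
    funext ⟨i, hi⟩
    rcases mem_insert.1 hi with rfl | hi
    · exact (Prod.ext_iff.1 h).1
    · exact congr_fun (Prod.ext_iff.1 h).2 ⟨i, hi⟩
  exact (ent_comp_of_injective _ hinj).symm

section Chain

variable {Ω α ι : Type*} [Fintype Ω] {p : Ω → ℝ} [Fintype α] [DecidableEq α] [LinearOrder ι]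

lemma ent_restrict_eq_sum_condEnt (hp : ∑ ω, p ω = 1) (X : ι → Ω → α) (s : Finset ι) :
    ent p (fun ω (i : ↥s) => X i ω) =
      ∑ i ∈ s, condEnt p (X i) (fun ω (j : ↥{j ∈ s | j < i}) => X j ω) := by
  induction s using Finset.induction_on_max with
  | empty => exact ent_of_subsingleton hp _
  | insert a s hlt ih =>
    have ha : a ∉ s := fun h => lt_irrefl a (hlt a h)
    have hfilter_a : {j ∈ insert a s | j < a} = s := by
      rw [filter_insert, if_neg (lt_irrefl a), filter_true_of_mem hlt]
    have hfilter : ∀ i ∈ s, {j ∈ insert a s | j < i} = {j ∈ s | j < i} := fun i hi => by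
      rw [filter_insert, if_neg (not_lt.2 (hlt i hi).le)]
    rw [sum_insert ha, hfilter_a, sum_congr rfl fun i hi => by rw [hfilter i hi], ← ih,
      ent_restrict_insert X ha, condEnt, sub_add_cancel]

lemma ent_eq_sum_condEnt [Fintype ι] (hp : ∑ ω, p ω = 1) (X : ι → Ω → α) :
    ent p (fun ω i => X i ω) =
      ∑ i, condEnt p (X i) (fun ω (j : ↥({j | j < i} : Finset ι)) => X j ω) := by
  have hinj : Function.Injective ((univ : Finset ι).restrict (π := fun _ => α)) :=
    fun v w h => funext fun i => congr_fun h ⟨i, mem_univ i⟩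
  rw [← ent_comp_of_injective _ hinj]
  exact ent_restrict_eq_sum_condEnt hp X univ

lemma sum_condEnt_le_ent_restrict [Fintype ι] (hp : IsProb p) (X : ι → Ω → α) (s : Finset ι) :
    ∑ i ∈ s, condEnt p (X i) (fun ω (j : ↥({j | j < i} : Finset ι)) => X j ω) ≤
      ent p (fun ω (i : ↥s) => X i ω) := by
  rw [ent_restrict_eq_sum_condEnt hp.2]
  exact sum_le_sum fun i _ =>
    condEnt_le_condEnt_comp hp.1 (X i) (fun ω (j : ↥({j | j < i} : Finset ι)) => X j ω)
      (restrict₂ (π := fun _ => α) (filter_subset_filter _ (subset_univ s)))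

end Chain

lemma sum_pmass_mul_sum_mem {Ω ι : Type*} [Fintype Ω] [Fintype ι] [DecidableEq ι]
    (p : Ω → ℝ) (S : Ω → Finset ι) (c : ι → ℝ) :
    ∑ s, pmass p S s * ∑ i ∈ s, c i = ∑ i, (∑ ω, if i ∈ S ω then p ω else 0) * c i :=
  calc ∑ s, pmass p S s * ∑ i ∈ s, c i
      = ∑ ω, ∑ i, if i ∈ S ω then p ω * c i else 0 := by
        rw [sum_pmass_mul S fun s => ∑ i ∈ s, c i]
        simp only [mul_sum, sum_ite_mem_eq]
    _ = _ := by
        rw [sum_comm]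
        simp only [sum_mul, ite_mul, zero_mul]

theorem stmt_9_general {Ω α : Type*} [Fintype Ω] [Fintype α] [DecidableEq α]
    (p : Ω → ℝ) (hp : IsProb p) (n : ℕ) (hn : 0 < n)
    (X : Fin n → Ω → α) (S : Ω → Finset (Fin n)) :
    ent p (fun ω => fun i => X i ω) *
        (Finset.univ.inf' ⟨⟨0, hn⟩, Finset.mem_univ _⟩
          (fun i : Fin n => ∑ ω, if i ∈ S ω then p ω else 0)) ≤
      ∑ s : Finset (Fin n),
        pmass p S s * ent p (fun ω => fun i : {i : Fin n // i ∈ s} => X i.1 ω) := by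
  set d := fun i : Fin n => condEnt p (X i) (fun ω (j : ↥({j | j < i} : Finset (Fin n))) => X j ω)
  set P := fun i : Fin n => ∑ ω, if i ∈ S ω then p ω else 0
  calc ent p (fun ω i => X i ω) * univ.inf' _ P = ∑ i, univ.inf' _ P * d i := by
        rw [ent_eq_sum_condEnt hp.2, sum_mul]
        simp only [d, mul_comm]
    _ ≤ ∑ i, P i * d i := sum_le_sum fun i _ =>
        mul_le_mul_of_nonneg_right (inf'_le _ (mem_univ i)) (condEnt_nonneg hp.1 _ _)
    _ = ∑ s, pmass p S s * ∑ i ∈ s, d i := (sum_pmass_mul_sum_mem p S d).symm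
    _ ≤ _ := sum_le_sum fun s _ =>
        mul_le_mul_of_nonneg_left (sum_condEnt_le_ent_restrict hp X s) (pmass_nonneg hp.1 S s)

theorem stmt_9 {Ω α : Type*} [Fintype Ω] [Fintype α] [DecidableEq α]
    (p : Ω → ℝ) (hp : IsProb p) (n : ℕ) (hn : 0 < n)
    (X : Fin n → Ω → α) (S : Ω → Finset (Fin n))
    (hindep : ∀ (s : Finset (Fin n)) (x : Fin n → α),
      pmass p (fun ω => (S ω, fun i => X i ω)) (s, x) =
        pmass p S s * pmass p (fun ω => fun i => X i ω) x) :
    ent p (fun ω => fun i => X i ω) *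
        (Finset.univ.inf' ⟨⟨0, hn⟩, Finset.mem_univ _⟩
          (fun i : Fin n => ∑ ω, if i ∈ S ω then p ω else 0)) ≤
      ∑ s : Finset (Fin n),
        pmass p S s * ent p (fun ω => fun i : {i : Fin n // i ∈ s} => X i.1 ω) :=
  stmt_9_general p hp n hn X S
end
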